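/- If A ⊆ V∖S intersects every hedge formed for Q[S] in G, then Pa↔(S) ⊆ A. -/

import Mathlib

/-- A semi-Markovian graph on vertex type `V`: a DAG of directed edges together with a
symmetric irreflexive relation of bidirected edges. `dir x y` means there is a directed
edge from `x` to `y`, i.e. `x` is a parent of `y`. -/
structure SemiMarkovian (V : Type*) where
  dir : V → V → Prop
  bid : V → V → Prop
  bid_symm : ∀ x y, bid x y → bid y x
  bid_irrefl : ∀ x, ¬ bid x x
  acyclic : ∀ x, ¬ Relation.TransGen dir x x

namespace SemiMarkovian

variable {V : Type*}

/-- The induced subgraph of `G` on the vertex set `W`. -/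
def induce (G : SemiMarkovian V) (W : Set V) : SemiMarkovian V where
  dir a b := a ∈ W ∧ b ∈ W ∧ G.dir a b
  bid a b := a ∈ W ∧ b ∈ W ∧ G.bid a b
  bid_symm := fun x y h => ⟨h.2.1, h.1, G.bid_symm x y h.2.2⟩
  bid_irrefl := fun x h => G.bid_irrefl x h.2.2
  acyclic := fun x h =>
    G.acyclic x (Relation.TransGen.mono (fun (_ _ : V) (hab : _ ∧ _ ∧ G.dir _ _) => hab.2.2) _ _ h)

/-- There is a directed path (possibly of length zero) from `x` to `y` all of whose
vertices lie in `F`. -/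
def DirPathIn (G : SemiMarkovian V) (F : Set V) (x y : V) : Prop :=
  x ∈ F ∧ Relation.ReflTransGen (fun a b => b ∈ F ∧ G.dir a b) x y

/-- `x` and `y` are joined by a path of bidirected edges all of whose vertices lie in `F`. -/
def BidConnIn (G : SemiMarkovian V) (F : Set V) (x y : V) : Prop :=
  x ∈ F ∧ Relation.ReflTransGen (fun a b => b ∈ F ∧ G.bid a b) x y

/-- `x` is an ancestor of the set `S` in `G[F]`. -/
def AncestorIn (G : SemiMarkovian V) (F S : Set V) (x : V) : Prop :=
  ∃ s ∈ S, G.DirPathIn F x s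

/-- `G[F]` is a c-component: any two vertices of `F` are joined by a path of bidirected
edges all of whose vertices lie in `F`. -/
def CComponent (G : SemiMarkovian V) (F : Set V) : Prop :=
  ∀ x ∈ F, ∀ y ∈ F, G.BidConnIn F x y

/-- `F` is a hedge formed for `Q[S]` in `G`: `S ⊊ F`, every vertex of `F` is an ancestor of
`S` in `G[F]`, and `G[F]` is a c-component. -/
def IsHedge (G : SemiMarkovian V) (S F : Set V) : Prop :=
  S ⊂ F ∧ (∀ x ∈ F, G.AncestorIn F S x) ∧ G.CComponent F

/-- The hedge hull of `S` in `G`: the union of `S` with all hedges formed for `Q[S]` in `G`. -/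
def Hhull (G : SemiMarkovian V) (S : Set V) : Set V :=
  S ∪ ⋃₀ {F | G.IsHedge S F}

/-- Vertices outside `S` that are parents of some vertex of `S`. -/
def Pa (G : SemiMarkovian V) (S : Set V) : Set V :=
  {x | x ∉ S ∧ ∃ s ∈ S, G.dir x s}

/-- Vertices outside `S` that have a bidirected edge to some vertex of `S`. -/
def Bid (G : SemiMarkovian V) (S : Set V) : Set V :=
  {x | x ∉ S ∧ ∃ s ∈ S, G.bid x s}

/-- `Pa↔(S) := Pa(S) ∩ Bid(S)`. -/
def PaBid (G : SemiMarkovian V) (S : Set V) : Set V := G.Pa S ∩ G.Bid S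

end SemiMarkovian
/-- If `A ⊆ V∖S` intersects every hedge formed for `Q[S]` in `G`, then
`Pa↔(S) ⊆ A`. -/
theorem paBid_subset_hitting {V : Type*} [Fintype V] (G : SemiMarkovian V) (S A : Set V)
    (hS : G.CComponent S) (hA : A ⊆ Sᶜ)
    (hhit : ∀ F, G.IsHedge S F → (A ∩ F).Nonempty) :
    G.PaBid S ⊆ A := by
  rintro x ⟨⟨hxS, s1, hs1, hdir⟩, -, s0, hs0, hbid⟩
  set F : Set V := insert x S with hF
  have hxF : x ∈ F := Or.inl rfl
  have hlift : ∀ a b, G.BidConnIn S a b → G.BidConnIn F a b := by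
    rintro a b ⟨ha, hp⟩
    exact ⟨Or.inr ha, Relation.ReflTransGen.mono (fun (u v : V) (huv : v ∈ S ∧ G.bid u v) => ⟨Or.inr huv.1, huv.2⟩) _ _ hp⟩
  have htoS : ∀ a ∈ F, ∀ b ∈ S, G.BidConnIn F a b := by
    rintro a (rfl | haS) b hb
    · exact ⟨hxF, Relation.ReflTransGen.head ⟨Or.inr hs0, hbid⟩
        (hlift s0 b (hS s0 hs0 b hb)).2⟩
    · exact hlift a b (hS a haS b hb)
  have hcc : G.CComponent F := by
    rintro a ha b (rfl | hbS)
    · rcases eq_or_ne a b with rfl | hab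
      · exact ⟨ha, Relation.ReflTransGen.refl⟩
      · have haS : a ∈ S := by rcases ha with rfl | h; exact absurd rfl hab; exact h
        exact ⟨Or.inr haS, ((hlift a s0 (hS a haS s0 hs0)).2).tail
          ⟨hxF, G.bid_symm b s0 hbid⟩⟩
    · exact htoS a ha b hbS
  have hhedge : G.IsHedge S F := by
    refine ⟨⟨Set.subset_insert x S, fun h => hxS (h hxF)⟩, ?_, hcc⟩
    rintro a (rfl | haS)
    · exact ⟨s1, hs1, hxF, Relation.ReflTransGen.single ⟨Or.inr hs1, hdir⟩⟩
    · exact ⟨a, haS, Or.inr haS, Relation.ReflTransGen.refl⟩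
  obtain ⟨a, haA, (rfl | haS)⟩ := hhit F hhedge
  · exact haA
  · exact absurd haS (hA haA)
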